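/- arXiv:1912.08980 — 2 statements merged into one kernel-verified Lean document; each statement's English description precedes it below -/
import Mathlib

section
/- If φ ∈ A_p(H) (i.e., φ is holomorphic on the half-plane H and ∬_H (2y)^{p−2}|φ| dxdy < ∞, where p ≥ 2 is an integer), then lim_{ρ→0} sup_{Im z ≤ ρ} (2 Im z)^p |φ(z)| = 0; equivalently, the weighted modulus λ_H(z)^{−p}|φ(z)| tends to 0 uniformly as z approaches the boundary. -/
open MeasureTheory Metric Complex Real Set


lemma circle_bound (f : ℂ → ℂ) (c : ℂ) (r : ℝ) (hr : 0 < r)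
    (hf : DifferentiableOn ℂ f (closedBall c r)) :
    2 * π * ‖f c‖ ≤ ∫ θ in (0:ℝ)..(2*π), ‖f (circleMap c r θ)‖ := by
  have hd : DiffContOnCl ℂ f (ball c r) := by
    apply DifferentiableOn.diffContOnCl
    rwa [closure_ball c hr.ne']
  have key := hd.two_pi_i_inv_smul_circleIntegral_sub_inv_smul (mem_ball_self hr)
  have h1 : ‖f c‖ = (2 * π)⁻¹ * ‖∮ z in C(c, r), (z - c)⁻¹ • f z‖ := by
    rw [← key, norm_smul]
    congr 1
    simp [abs_of_pos pi_pos]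
  have h2 : ‖∮ z in C(c, r), (z - c)⁻¹ • f z‖ ≤ ∫ θ in (0:ℝ)..(2*π), ‖f (circleMap c r θ)‖ := by
    rw [circleIntegral]
    refine le_trans (intervalIntegral.norm_integral_le_integral_norm (by positivity)) ?_
    apply le_of_eq
    apply intervalIntegral.integral_congr
    intro θ _
    simp only [norm_smul, deriv_circleMap, circleMap_sub_center]
    rw [norm_mul, norm_circleMap_zero, norm_inv,
      norm_circleMap_zero, Complex.norm_I, abs_of_pos hr]
    field_simp
  have hπ : (0:ℝ) < 2 * π := by positivity
  rw [h1, ← mul_assoc, mul_inv_cancel₀ hπ.ne', one_mul]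
  exact h2

lemma area_bound (f : ℂ → ℂ) (c : ℂ) (R : ℝ) (hR : 0 < R)
    (hf : DifferentiableOn ℂ f (closedBall c R)) :
    π * R ^ 2 * ‖f c‖ ≤ ∫ w in ball c R, ‖f w‖ := by
  set G : ℝ × ℝ → ℝ := fun p => p.1 * ‖f (c + Complex.polarCoord.symm p)‖ with hG
  have hsymm : ∀ p : ℝ × ℝ, c + Complex.polarCoord.symm p = circleMap c p.1 p.2 := by
    intro p
    rw [Complex.polarCoord_symm_apply, circleMap, Complex.exp_mul_I]
    push_cast; ring
  -- continuity and integrability of G on the compact rectangle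
  have hT : Continuous fun p : ℝ × ℝ => c + Complex.polarCoord.symm p := by
    simp only [Complex.polarCoord_symm_apply]
    fun_prop
  have hmaps : MapsTo (fun p : ℝ × ℝ => c + Complex.polarCoord.symm p)
      (Icc 0 R ×ˢ Icc (-π) π) (closedBall c R) := by
    intro p hp
    simp only [mem_closedBall, dist_eq_norm, add_sub_cancel_left,
      Complex.polarCoord_symm_apply]
    rw [norm_mul, Complex.norm_real, Real.norm_eq_abs, Complex.ofReal_cos, Complex.ofReal_sin,
      Complex.norm_cos_add_sin_mul_I, mul_one,
      _root_.abs_of_nonneg hp.1.1]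
    exact hp.1.2
  have hGcont : ContinuousOn G (Icc 0 R ×ˢ Icc (-π) π) := by
    apply (continuous_fst.continuousOn).mul
    exact (hf.continuousOn.comp hT.continuousOn hmaps).norm
  have hGint : IntegrableOn G (Ioo 0 R ×ˢ Ioo (-π) π) := by
    apply IntegrableOn.mono_set
      (hGcont.integrableOn_compact (isCompact_Icc.prod isCompact_Icc))
    exact Set.prod_mono Ioo_subset_Icc_self Ioo_subset_Icc_self
  -- rewrite the ball integral in polar coordinates
  have step : ∫ w in ball c R, ‖f w‖ = ∫ p in Ioo 0 R ×ˢ Ioo (-π) π, G p := by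
    rw [← integral_indicator measurableSet_ball]
    have e1 : ∀ w : ℂ, indicator (ball c R) (fun w => ‖f w‖) w
        = indicator (ball (0:ℂ) R) (fun w => ‖f (c + w)‖) (w - c) := by
      intro w
      by_cases h : w ∈ ball c R
      · rw [indicator_of_mem h, indicator_of_mem, add_sub_cancel]
        simpa [mem_ball, dist_eq_norm] using h
      · rw [indicator_of_notMem h, indicator_of_notMem]
        simpa [mem_ball, dist_eq_norm] using h
    simp_rw [e1]
    rw [show (fun w : ℂ => indicator (ball (0:ℂ) R) (fun w => ‖f (c + w)‖) (w - c))
        = (fun w : ℂ => indicator (ball (0:ℂ) R) (fun w => ‖f (c + w)‖) (-c + w)) by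
      funext w; rw [neg_add_eq_sub]]
    rw [integral_add_left_eq_self (fun w : ℂ => indicator (ball (0:ℂ) R) (fun w => ‖f (c + w)‖) w) (-c)]
    rw [← Complex.integral_comp_polarCoord_symm]
    have e2 : ∀ p ∈ polarCoord.target,
        p.1 • indicator (ball (0:ℂ) R) (fun w => ‖f (c + w)‖) (Complex.polarCoord.symm p)
        = indicator (Ioo 0 R ×ˢ Ioo (-π) π) G p := by
      intro p hp
      have habs : ‖Complex.polarCoord.symm p‖ = p.1 := by
        rw [Complex.norm_polarCoord_symm, abs_of_pos hp.1]
      by_cases h : p.1 < R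
      · rw [indicator_of_mem, indicator_of_mem]
        · simp [hG, smul_eq_mul]
        · exact ⟨⟨hp.1, h⟩, hp.2⟩
        · rwa [mem_ball_zero_iff, habs]
      · rw [indicator_of_notMem, indicator_of_notMem, smul_zero]
        · exact fun hmem => h hmem.1.2
        · rw [mem_ball_zero_iff, habs]; exact fun hh => h hh
    rw [setIntegral_congr_fun (by exact measurableSet_Ioi.prod measurableSet_Ioo) e2,
      setIntegral_indicator (by exact (measurableSet_Ioo.prod measurableSet_Ioo)),
      polarCoord_target]
    rw [Set.inter_eq_self_of_subset_right (Set.prod_mono Ioo_subset_Ioi_self (subset_refl _))]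
  rw [step]
  -- Fubini
  have hfub : ∫ p in Ioo 0 R ×ˢ Ioo (-π) π, G p
      = ∫ r in Ioo 0 R, ∫ θ in Ioo (-π) π, G (r, θ) := by
    rw [Measure.volume_eq_prod] at hGint ⊢
    exact setIntegral_prod G hGint
  rw [hfub]
  -- innner bound
  have inner_eq : ∀ r ∈ Ioo (0:ℝ) R, ∫ θ in Ioo (-π) π, G (r, θ)
      = r * ∫ θ in (0:ℝ)..(2*π), ‖f (circleMap c r θ)‖ := by
    intro r hr
    have : ∀ θ : ℝ, G (r, θ) = r * ‖f (circleMap c r θ)‖ := by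
      intro θ; rw [hG]; simp only; rw [hsymm (r, θ)]
    simp_rw [this]
    rw [integral_const_mul]
    congr 1
    have hper : Function.Periodic (fun θ => ‖f (circleMap c r θ)‖) (2 * π) :=
      (periodic_circleMap c r).comp fun z => ‖f z‖
    have := hper.intervalIntegral_add_eq (-π) 0
    rw [zero_add, show -π + 2 * π = π by ring] at this
    rw [← integral_Ioc_eq_integral_Ioo, ← intervalIntegral.integral_of_le (by linarith [pi_pos]),
      this]
  have h2π : (0:ℝ) < 2 * π := by positivity
  have base : ∫ r in Ioo (0:ℝ) R, (2 * π * ‖f c‖) * r = π * R ^ 2 * ‖f c‖ := by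
    rw [integral_const_mul, ← integral_Ioc_eq_integral_Ioo,
      ← intervalIntegral.integral_of_le hR.le, integral_id]
    ring
  rw [← base]
  have hint2 : IntegrableOn (fun r : ℝ => ∫ θ in Ioo (-π) π, G (r, θ)) (Ioo 0 R) := by
    have h' := hGint
    rw [IntegrableOn, Measure.volume_eq_prod, ← Measure.prod_restrict] at h'
    exact h'.integral_prod_left
  apply setIntegral_mono_on
  · apply IntegrableOn.mono_set _ Ioo_subset_Icc_self
    exact (continuous_const.mul continuous_id).continuousOn.integrableOn_compact isCompact_Icc
  · exact hint2
  · exact measurableSet_Ioo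
  · intro r hr
    rw [inner_eq r hr, mul_comm (2 * π * ‖f c‖) r]
    exact mul_le_mul_of_nonneg_left
      (circle_bound f c r hr.1 (hf.mono (closedBall_subset_closedBall hr.2.le))) hr.1.le

lemma strip_small (p : ℕ) (φ : ℂ → ℂ)
    (hint : IntegrableOn (fun z : ℂ => (2 * z.im) ^ (p - 2) * ‖φ z‖) {z : ℂ | 0 < z.im}) :
    ∀ ε' > (0:ℝ), ∃ δ > (0:ℝ),
      ∫ w in {z : ℂ | 0 < z.im ∧ z.im < δ}, (2 * w.im) ^ (p - 2) * ‖φ w‖ < ε' := by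
  intro ε' hε'
  set W : ℂ → ℝ := fun z => (2 * z.im) ^ (p - 2) * ‖φ z‖ with hW
  have hHm : MeasurableSet {z : ℂ | 0 < z.im} :=
    (isOpen_Ioi.preimage Complex.continuous_im).measurableSet
  have hSm : ∀ δ : ℝ, MeasurableSet {z : ℂ | 0 < z.im ∧ z.im < δ} := fun δ =>
    (isOpen_Ioo.preimage Complex.continuous_im).measurableSet
  have hSsub : ∀ δ : ℝ, {z : ℂ | 0 < z.im ∧ z.im < δ} ⊆ {z : ℂ | 0 < z.im} :=
    fun δ z hz => hz.1
  set F : ℕ → ℂ → ℝ := fun n => Set.indicator {z : ℂ | 0 < z.im ∧ z.im < 1/(n+1)} W with hF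
  set B : ℂ → ℝ := fun z => Set.indicator {z : ℂ | 0 < z.im} W z with hB
  have hWnn : ∀ z : ℂ, 0 < z.im → 0 ≤ W z := by
    intro z hz
    have : (0:ℝ) ≤ 2 * z.im := by linarith
    positivity
  have htend : Filter.Tendsto (fun n => ∫ z, F n z) Filter.atTop (nhds 0) := by
    have h0 : (0:ℝ) = ∫ z : ℂ, (0:ℝ) := by simp
    rw [h0]
    apply MeasureTheory.tendsto_integral_of_dominated_convergence B
    · intro n
      rw [aestronglyMeasurable_indicator_iff (hSm _)]
      exact hint.aestronglyMeasurable.mono_measure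
        (Measure.restrict_mono (hSsub _) le_rfl)
    · exact hint.integrable_indicator hHm
    · intro n
      filter_upwards with z
      by_cases h : z ∈ {z : ℂ | 0 < z.im ∧ z.im < 1/(n+1)}
      · rw [hF]; simp only
        rw [Set.indicator_of_mem h, hB]
        simp only
        rw [Set.indicator_of_mem (hSsub _ h), Real.norm_eq_abs,
          _root_.abs_of_nonneg (hWnn z h.1)]
      · rw [hF]; simp only
        rw [Set.indicator_of_notMem h, norm_zero, hB]
        simp only
        by_cases h2 : z ∈ {z : ℂ | 0 < z.im}
        · rw [Set.indicator_of_mem h2]; exact hWnn z h2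
        · rw [Set.indicator_of_notMem h2]
    · filter_upwards with z
      by_cases h : 0 < z.im
      · have : ∀ᶠ n in Filter.atTop, F n z = 0 := by
          have ht : Filter.Tendsto (fun n : ℕ => 1/((n:ℝ)+1)) Filter.atTop (nhds 0) :=
            tendsto_one_div_add_atTop_nhds_zero_nat
          filter_upwards [ht.eventually (gt_mem_nhds h)] with n hn
          rw [hF]; simp only
          apply Set.indicator_of_notMem
          intro hmem
          exact absurd hmem.2 (not_lt.mpr hn.le)
        exact Filter.Tendsto.congr' (this.mono fun n hn => hn.symm) tendsto_const_nhds
      · have : ∀ n, F n z = 0 := by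
          intro n
          apply Set.indicator_of_notMem
          intro hmem; exact h hmem.1
        simp_rw [this]; exact tendsto_const_nhds
  have := htend.eventually (gt_mem_nhds hε')
  obtain ⟨n, hn⟩ := this.exists
  refine ⟨1/(n+1), by positivity, ?_⟩
  rwa [← MeasureTheory.integral_indicator (hSm _)]

/-- if `φ ∈ A_p(H)` then the `B_p`-weight `(2 Im z)^p |φ(z)|` tends to `0`
uniformly as `z` approaches the boundary of the half-plane:
`lim_{ρ → 0} sup_{0 < Im z ≤ ρ} (2 Im z)^p |φ(z)| = 0`. -/
theorem stmt4 (p : ℕ) (hp : 2 ≤ p) (φ : ℂ → ℂ)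
    (hφ : DifferentiableOn ℂ φ {z : ℂ | 0 < z.im})
    (hint : IntegrableOn (fun z : ℂ => (2 * z.im) ^ (p - 2) * ‖φ z‖) {z : ℂ | 0 < z.im}) :
    ∀ ε > (0 : ℝ), ∃ ρ > (0 : ℝ), ∀ z : ℂ, 0 < z.im → z.im ≤ ρ →
      (2 * z.im) ^ p * ‖φ z‖ < ε := by
  intro ε hε
  set k := p - 2 with hk
  have hpk : p = k + 2 := (Nat.sub_add_cancel hp).symm
  have hC : (0:ℝ) < 2 ^ (p + 2) / π := by positivity
  obtain ⟨δ, hδ, hI⟩ := strip_small p φ hint (ε * π / 2 ^ (p + 2)) (by positivity)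
  set I : ℝ := ∫ w in {z : ℂ | 0 < z.im ∧ z.im < δ}, (2 * w.im) ^ (p - 2) * ‖φ w‖ with hIdef
  refine ⟨2 * δ / 3, by positivity, ?_⟩
  intro z hz hzρ
  set y := z.im with hy
  set r := y / 2 with hrdef
  have hr : 0 < r := by positivity
  -- the closed ball lies in the half plane, with im ≥ y/2
  have him : ∀ w ∈ closedBall z r, y / 2 ≤ w.im ∧ w.im ≤ y + r := by
    intro w hw
    have h1 : |(w - z).im| ≤ ‖w - z‖ := Complex.abs_im_le_norm _
    rw [mem_closedBall, dist_eq_norm] at hw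
    rw [Complex.sub_im] at h1
    have := abs_le.mp (h1.trans hw)
    constructor <;> [linarith [this.1]; linarith [this.2]]
  have hsubH : closedBall z r ⊆ {z : ℂ | 0 < z.im} := by
    intro w hw
    have := (him w hw).1
    simp only [Set.mem_setOf_eq]
    linarith
  have hd : DifferentiableOn ℂ φ (closedBall z r) := hφ.mono hsubH
  have area := area_bound φ z r hr hd
  -- ball is inside the strip
  have hball_strip : ball z r ⊆ {w : ℂ | 0 < w.im ∧ w.im < δ} := by
    intro w hw
    have h1 : |(w - z).im| ≤ ‖w - z‖ := Complex.abs_im_le_norm _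
    rw [mem_ball, dist_eq_norm] at hw
    rw [Complex.sub_im] at h1
    have h2 := abs_lt.mp (h1.trans_lt hw)
    have hyz : y = z.im := hy
    refine ⟨by linarith [h2.1, hrdef, hyz], by linarith [h2.2, hrdef, hyz, hzρ]⟩
  -- pointwise bound on the ball
  have hyk : (0:ℝ) < y ^ k := pow_pos hz k
  have hWball : ∀ w ∈ ball z r, ‖φ w‖ ≤ (y ^ k)⁻¹ * ((2 * w.im) ^ (p - 2) * ‖φ w‖) := by
    intro w hw
    have h := him w (ball_subset_closedBall hw)
    have h2 : y ≤ 2 * w.im := by linarith [h.1]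
    have h3 : y ^ k ≤ (2 * w.im) ^ k := pow_le_pow_left₀ hz.le h2 k
    rw [← hk]
    calc ‖φ w‖ = (y ^ k)⁻¹ * (y ^ k * ‖φ w‖) := by
          field_simp
      _ ≤ (y ^ k)⁻¹ * ((2 * w.im) ^ k * ‖φ w‖) := by
          apply mul_le_mul_of_nonneg_left _ (inv_nonneg.mpr hyk.le)
          exact mul_le_mul_of_nonneg_right h3 (norm_nonneg _)
  -- integrability facts
  have hint_ball : IntegrableOn (fun w : ℂ => (2 * w.im) ^ (p - 2) * ‖φ w‖) (ball z r) :=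
    hint.mono_set ((ball_subset_closedBall).trans hsubH)
  have hφ_ball : IntegrableOn (fun w : ℂ => ‖φ w‖) (ball z r) :=
    ((hd.continuousOn.norm).integrableOn_compact (isCompact_closedBall z r)).mono_set
      ball_subset_closedBall
  have step1 : ∫ w in ball z r, ‖φ w‖
      ≤ (y ^ k)⁻¹ * ∫ w in ball z r, (2 * w.im) ^ (p - 2) * ‖φ w‖ := by
    rw [← integral_const_mul]
    apply setIntegral_mono_on hφ_ball (hint_ball.const_mul _) measurableSet_ball
    exact hWball
  have hSm : MeasurableSet {w : ℂ | 0 < w.im ∧ w.im < δ} :=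
    (isOpen_Ioo.preimage Complex.continuous_im).measurableSet
  have step2 : ∫ w in ball z r, (2 * w.im) ^ (p - 2) * ‖φ w‖ ≤ I := by
    rw [hIdef]
    apply setIntegral_mono_set (hint.mono_set fun w hw => hw.1)
    · rw [Filter.EventuallyLE]
      rw [ae_restrict_iff' hSm]
      filter_upwards with w hw
      have : (0:ℝ) ≤ 2 * w.im := by linarith [hw.1]
      positivity
    · exact Filter.Eventually.of_forall hball_strip
  have h1 : π * r ^ 2 * ‖φ z‖ ≤ (y ^ k)⁻¹ * I := by
    refine area.trans (step1.trans ?_)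
    exact mul_le_mul_of_nonneg_left step2 (inv_nonneg.mpr hyk.le)
  have hπr : (0:ℝ) < π * r ^ 2 := by positivity
  have h2 : ‖φ z‖ ≤ ((y ^ k)⁻¹ * I) / (π * r ^ 2) := by
    rw [le_div_iff₀ hπr]
    linarith [h1]
  have key : (2 * y) ^ p * ‖φ z‖ ≤ 2 ^ (p + 2) / π * I := by
    calc (2 * y) ^ p * ‖φ z‖ ≤ (2 * y) ^ p * (((y ^ k)⁻¹ * I) / (π * r ^ 2)) :=
          mul_le_mul_of_nonneg_left h2 (by positivity)
      _ = 2 ^ (p + 2) / π * I := by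
          rw [hrdef, hpk, mul_pow, pow_add y k 2, pow_add (2:ℝ) (k+2) 2,
            pow_add (2:ℝ) k 2]
          field_simp
  have : 2 ^ (p + 2) / π * I < 2 ^ (p + 2) / π * (ε * π / 2 ^ (p + 2)) :=
    mul_lt_mul_of_pos_left hI hC
  have heq : 2 ^ (p + 2) / π * (ε * π / 2 ^ (p + 2)) = ε := by
    field_simp
  linarith [key, this, heq ▸ this]
end

section
/- Let r be a rational function of the form r(z) = Σ_{j=1}^n c_j/(z−a_j)² + Σ_{j=1}^n c_j'/(z−a_j) with all poles a_j on the unit circle and not all c_j, c_j' zero, and suppose r is bounded in the norm ‖r‖ = sup_{|z|<1}(1−|z|²)²|r(z)| < ∞. If r'(0) ≠ 0, then the function F(z) = (1−|z|²)²|r(z)| on the closed unit disk does not attain its maximum at z = 0. -/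
/-!
Rotate so that `r(0) = |r(0)| v` with `|v| = 1`, and pick the direction `u`, `|u| = 1`, with
`v̄ r'(0) u = |r'(0)|`. Along the ray `t ↦ t u`, `G(t) = (1 - t²)² Re(v̄ r(t u))` starts at
`|r(0)|` with slope `|r'(0)| > 0`, because the weight has vanishing derivative at `0`; and
`G(t) ≤ (1 - t²)² |r(t u)|`.
-/

open Filter Topology Complex

theorem HasDerivAt.eventually_lt_nhdsGT {φ : ℝ → ℝ} {d x : ℝ} (h : HasDerivAt φ d x)
    (hd : 0 < d) : ∀ᶠ t in 𝓝[>] x, φ x < φ t := by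
  filter_upwards [nhdsGT_le_nhdsNE x <|
      (hasDerivAt_iff_tendsto_slope.mp h).eventually (eventually_gt_nhds hd),
    self_mem_nhdsWithin] with t hslope hxt
  rw [slope_def_field] at hslope
  exact sub_pos.mp ((div_pos_iff_of_pos_right (sub_pos.mpr hxt)).mp hslope)

theorem Complex.exists_norm_eq_one_mul_eq_norm (z : ℂ) : ∃ v : ℂ, ‖v‖ = 1 ∧ v * z = ‖z‖ := by
  refine ⟨exp (-(arg z * I)), by simpa using norm_exp_ofReal_mul_I (-arg z), ?_⟩
  calc exp (-(arg z * I)) * z = exp (-(arg z * I)) * (‖z‖ * exp (arg z * I)) := by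
        rw [norm_mul_exp_arg_mul_I]
    _ = ‖z‖ := by rw [mul_left_comm, ← exp_add, neg_add_cancel, exp_zero, mul_one]

theorem HasDerivAt.hasDerivAt_re_mul_comp_ofReal_mul {f : ℂ → ℂ} {A u : ℂ} {x : ℝ}
    (hf : HasDerivAt f A (x * u)) (v : ℂ) :
    HasDerivAt (fun t : ℝ => (v * f (t * u)).re) (v * A * u).re x := by
  have hline : HasDerivAt (fun w : ℂ => w * u) u x := by
    simpa using (hasDerivAt_id (x : ℂ)).mul_const u
  simpa [mul_assoc] using ((hf.comp (x : ℂ) hline).const_mul v).real_of_complex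

theorem hasDerivAt_one_sub_sq_sq : HasDerivAt (fun t : ℝ => (1 - t ^ 2) ^ 2) 0 0 := by
  simpa using ((hasDerivAt_pow 2 (0 : ℝ)).const_sub 1).fun_pow 2

theorem HasDerivAt.exists_eventually_norm_lt_weighted_norm {f : ℂ → ℂ} {A : ℂ}
    (hf : HasDerivAt f A 0) (hA : A ≠ 0) :
    ∃ u : ℂ, ‖u‖ = 1 ∧ ∀ᶠ t : ℝ in 𝓝[>] 0, ‖f 0‖ < (1 - t ^ 2) ^ 2 * ‖f (t * u)‖ := by
  obtain ⟨v, hv, hvf⟩ := exists_norm_eq_one_mul_eq_norm (f 0)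
  obtain ⟨u, hu, huA⟩ := exists_norm_eq_one_mul_eq_norm (v * A)
  refine ⟨u, hu, ?_⟩
  have hG : HasDerivAt (fun t : ℝ => (1 - t ^ 2) ^ 2 * (v * f (t * u)).re) ‖A‖ 0 := by
    have hf' : HasDerivAt f A (((0 : ℝ) : ℂ) * u) := by simpa using hf
    refine (hasDerivAt_one_sub_sq_sq.mul (hf'.hasDerivAt_re_mul_comp_ofReal_mul v)).congr_deriv ?_
    rw [mul_comm (v * A), huA, norm_mul, hv, one_mul]
    simp
  filter_upwards [hG.eventually_lt_nhdsGT (norm_pos_iff.mpr hA)] with t ht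
  calc ‖f 0‖ = (1 - (0 : ℝ) ^ 2) ^ 2 * (v * f (((0 : ℝ) : ℂ) * u)).re := by simp [hvf]
    _ < (1 - t ^ 2) ^ 2 * (v * f (t * u)).re := ht
    _ ≤ (1 - t ^ 2) ^ 2 * ‖f (t * u)‖ := by
      gcongr
      calc (v * f (t * u)).re ≤ ‖v * f (t * u)‖ := re_le_norm _
        _ = ‖f (t * u)‖ := by rw [norm_mul, hv, one_mul]

theorem stmt5_general
    (r : ℂ → ℂ)
    (hd : deriv r 0 ≠ 0) :
    ∃ z : ℂ, ‖z‖ < 1 ∧ ‖r 0‖ < (1 - ‖z‖ ^ 2) ^ 2 * ‖r z‖ := by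
  obtain ⟨u, hu, hlt⟩ :=
    (differentiableAt_of_deriv_ne_zero hd).hasDerivAt.exists_eventually_norm_lt_weighted_norm hd
  obtain ⟨t, ht, ⟨ht₀, ht₁⟩⟩ := (hlt.and (Ioo_mem_nhdsGT zero_lt_one)).exists
  have hnorm : ‖(t : ℂ) * u‖ = t := by
    rw [norm_mul, hu, mul_one, norm_real, Real.norm_of_nonneg ht₀.le]
  exact ⟨t * u, by rwa [hnorm], by rwa [hnorm]⟩

/-- for a rational function `r` of the form (3) with poles of order two
on the unit circle, bounded in the `B₂` norm, if `r'(0) ≠ 0` then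
`F(z) = (1-|z|²)² |r(z)|` does not attain its maximum over the unit disk at `z = 0`. -/
theorem stmt5 (n : ℕ) (a c c' : Fin n → ℂ) (ha : ∀ j, ‖a j‖ = 1)
    (hc : 0 < ∑ j, ‖c j‖)
    (r : ℂ → ℂ)
    (hr : ∀ z : ℂ, r z = (∑ j, c j / (z - a j) ^ 2) + ∑ j, c' j / (z - a j))
    (hb : ∃ C : ℝ, ∀ z : ℂ, ‖z‖ < 1 → (1 - ‖z‖ ^ 2) ^ 2 * ‖r z‖ ≤ C)
    (hd : deriv r 0 ≠ 0) :
    ∃ z : ℂ, ‖z‖ < 1 ∧ ‖r 0‖ < (1 - ‖z‖ ^ 2) ^ 2 * ‖r z‖ :=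
  stmt5_general r hd
end
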